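/- All zeros of the orthogonal polynomials Φ_n generated by the Szegő recursion with |α_k| < 1 lie strictly inside the open unit disc. -/

import Mathlib

/-!
For `|z| ≥ 1` one propagates `|Φₙ*(z)| ≤ |Φₙ(z)|` and `Φₙ(z) ≠ 0` along the recursion.
Since `deg Φₙ = n` exactly, reversing the recursion gives the dual recursion
`Φₙ₊₁* = Φₙ* - αₙ z Φₙ`, and the pair of recursions satisfies
`|Φₙ₊₁|² - |Φₙ₊₁*|² = (1 - |αₙ|²)(|z Φₙ|² - |Φₙ*|²)`, which keeps the inequality.
Nonvanishing follows because `|conj αₙ · Φₙ*(z)| ≤ |αₙ| |z Φₙ(z)| < |z Φₙ(z)|`.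
-/

open Polynomial

/-- The reversed polynomial P*(z) = z^{deg P} conj(P(1/conj z)). -/
noncomputable def szegoStar (P : Polynomial ℂ) : Polynomial ℂ :=
  (P.map (starRingEnd ℂ)).reverse

lemma szegoStar_eq_reflect (P : ℂ[X]) :
    szegoStar P = reflect P.natDegree (P.map (starRingEnd ℂ)) := by
  rw [szegoStar, reverse, natDegree_map]

@[simp] lemma szegoStar_one : szegoStar 1 = 1 := by
  simpa [szegoStar] using reverse_C (1 : ℂ)

lemma natDegree_szegoStar_le (P : ℂ[X]) : (szegoStar P).natDegree ≤ P.natDegree :=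
  (reverse_natDegree_le _).trans (natDegree_map _).le

lemma natDegree_C_mul_szegoStar_lt_natDegree_X_mul {P : ℂ[X]} (hP : P ≠ 0) (c : ℂ) :
    (C c * szegoStar P).natDegree < (X * P).natDegree := by
  rw [natDegree_X_mul hP]
  exact Nat.lt_succ_of_le ((natDegree_C_mul_le _ _).trans (natDegree_szegoStar_le P))

lemma natDegree_X_mul_sub_C_mul_szegoStar {P : ℂ[X]} (hP : P ≠ 0) (c : ℂ) :
    (X * P - C c * szegoStar P).natDegree = P.natDegree + 1 := by
  rw [natDegree_sub_eq_left_of_natDegree_lt (natDegree_C_mul_szegoStar_lt_natDegree_X_mul hP c),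
    natDegree_X_mul hP]

lemma Polynomial.Monic.X_mul_sub_C_mul_szegoStar {P : ℂ[X]} (hP : P.Monic) (c : ℂ) :
    (X * P - C c * szegoStar P).Monic :=
  (monic_X.mul hP).sub_of_left
    (degree_lt_degree (natDegree_C_mul_szegoStar_lt_natDegree_X_mul hP.ne_zero c))

lemma szegoStar_X_mul_sub_C_mul_szegoStar {P : ℂ[X]} (hP : P ≠ 0) (a : ℂ) :
    szegoStar (X * P - C (starRingEnd ℂ a) * szegoStar P) = szegoStar P - C a * X * P := by
  set n := P.natDegree with hn
  have hreflect : reflect (n + 1) (reflect n P) = P * X := by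
    simpa using reflect_mul (reflect n P) 1 (natDegree_reflect_le.trans (by simp [hn]))
      (natDegree_one.trans_le zero_le_one) (F := n) (G := 1)
  rw [szegoStar_eq_reflect, natDegree_X_mul_sub_C_mul_szegoStar hP, szegoStar_eq_reflect, ← hn]
  simp only [Polynomial.map_sub, Polynomial.map_mul, map_X, map_C, Complex.conj_conj, ← reflect_map,
    map_map, RingHomCompTriple.comp_eq, Polynomial.map_id, reflect_sub, reflect_C_mul, hreflect]
  rw [add_comm n 1, reflect_mul X _ natDegree_X_le (natDegree_map _).le, reflect_one_X, one_mul]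
  ring

lemma norm_sq_sub_norm_sq_szego_step (z a f g : ℂ) :
    ‖z * f - starRingEnd ℂ a * g‖ ^ 2 - ‖g - a * z * f‖ ^ 2
      = (1 - ‖a‖ ^ 2) * (‖z * f‖ ^ 2 - ‖g‖ ^ 2) := by
  simp only [← Complex.normSq_eq_norm_sq, Complex.normSq_apply, Complex.mul_re, Complex.mul_im,
    Complex.sub_re, Complex.sub_im, Complex.conj_re, Complex.conj_im]
  ring

lemma norm_szego_step_le {z a f g : ℂ} (ha : ‖a‖ ≤ 1) (hg : ‖g‖ ≤ ‖z * f‖) :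
    ‖g - a * z * f‖ ≤ ‖z * f - starRingEnd ℂ a * g‖ := by
  have hnonneg : 0 ≤ (1 - ‖a‖ ^ 2) * (‖z * f‖ ^ 2 - ‖g‖ ^ 2) :=
    mul_nonneg (by nlinarith [norm_nonneg a]) (by nlinarith [norm_nonneg g])
  rw [← norm_sq_sub_norm_sq_szego_step] at hnonneg
  exact (pow_le_pow_iff_left₀ (norm_nonneg _) (norm_nonneg _) two_ne_zero).1 (by linarith)

lemma szego_step_ne_zero {z a f g : ℂ} (ha : ‖a‖ < 1) (hg : ‖g‖ ≤ ‖z * f‖) (hzf : z * f ≠ 0) :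
    z * f - starRingEnd ℂ a * g ≠ 0 := by
  refine sub_ne_zero.2 fun h ↦ ?_
  have hpos : 0 < ‖z * f‖ := norm_pos_iff.2 hzf
  have : ‖z * f‖ < ‖z * f‖ :=
    calc ‖z * f‖ = ‖a‖ * ‖g‖ := by rw [h, norm_mul, Complex.norm_conj]
      _ ≤ ‖a‖ * ‖z * f‖ := by gcongr
      _ < ‖z * f‖ := mul_lt_of_lt_one_left hpos ha
  exact this.false

section SzegoRecursion

variable {α : ℕ → ℂ} {Φ : ℕ → ℂ[X]} (h0 : Φ 0 = 1)
  (hrec : ∀ n, Φ (n + 1) = X * Φ n - C (starRingEnd ℂ (α n)) * szegoStar (Φ n))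
include h0 hrec

lemma monic_of_szego_recursion (n : ℕ) : (Φ n).Monic := by
  induction n with
  | zero => simp [h0]
  | succ n ih => simpa [hrec n] using ih.X_mul_sub_C_mul_szegoStar _

lemma norm_eval_szegoStar_le_and_eval_ne_zero (hα : ∀ n, ‖α n‖ < 1) (n : ℕ) {z : ℂ}
    (hz : 1 ≤ ‖z‖) :
    ‖(szegoStar (Φ n)).eval z‖ ≤ ‖(Φ n).eval z‖ ∧ (Φ n).eval z ≠ 0 := by
  induction n with
  | zero => simp [h0]
  | succ n ih =>
    obtain ⟨hle, hne⟩ := ih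
    have hΦ : (Φ (n + 1)).eval z
        = z * (Φ n).eval z - starRingEnd ℂ (α n) * (szegoStar (Φ n)).eval z := by
      simp [hrec n]
    have hΦstar : (szegoStar (Φ (n + 1))).eval z
        = (szegoStar (Φ n)).eval z - α n * z * (Φ n).eval z := by
      simp [hrec n, szegoStar_X_mul_sub_C_mul_szegoStar (monic_of_szego_recursion h0 hrec n).ne_zero]
    have hz0 : z ≠ 0 := norm_pos_iff.1 (zero_lt_one.trans_le hz)
    have hg : ‖(szegoStar (Φ n)).eval z‖ ≤ ‖z * (Φ n).eval z‖ :=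
      hle.trans (by rw [norm_mul]; exact le_mul_of_one_le_left (norm_nonneg _) hz)
    rw [hΦ, hΦstar]
    exact ⟨norm_szego_step_le (hα n).le hg, szego_step_ne_zero (hα n) hg (mul_ne_zero hz0 hne)⟩

end SzegoRecursion

/-- All zeros of Szegő recursion polynomials lie in the open unit disc. -/
theorem szego_zeros_in_disc (α : ℕ → ℂ) (hα : ∀ n, ‖α n‖ < 1)
    (Φ : ℕ → Polynomial ℂ) (h0 : Φ 0 = 1)
    (hrec : ∀ n, Φ (n + 1) = X * Φ n - C (starRingEnd ℂ (α n)) * szegoStar (Φ n)) :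
    ∀ n, ∀ z : ℂ, (Φ n).eval z = 0 → ‖z‖ < 1 := by
  intro n z hz
  by_contra! h
  exact (norm_eval_szegoStar_le_and_eval_ne_zero h0 hrec hα n h).2 hz
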